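/- In intuitionistic linear logic, for classical constraints c, c', d with c ⊢ c' (and c, c', d all satisfying classicality: x ⊢ 1 and ∀e, e ⊢ x ⊗ ⊤ ⇒ e ⊢ x ⊗ e), the formula !(c ⊸ c' ⊗ ⊤) ⊗ ⊤ is logically equivalent to 1 ⊗ ⊤ (i.e., to ⊤): a replicated ask that tells an entailed classical constraint is logically trivial. -/
import Mathlib


/-- Formulas of propositional intuitionistic linear logic. -/
inductive Fm : Type
  | atom : ℕ → Fm
  | one : Fm
  | top : Fm
  | tensor : Fm → Fm → Fm
  | limp : Fm → Fm → Fm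
  | with_ : Fm → Fm → Fm
  | bang : Fm → Fm

open Fm

/-- Sequent calculus for intuitionistic linear logic: `Der Γ A` means `Γ ⊢ A`. -/
inductive Der : List Fm → Fm → Prop
  | id (A) : Der [A] A
  | exch {Γ Δ A} (h : Γ.Perm Δ) : Der Γ A → Der Δ A
  | cut {Γ Δ A C} : Der Γ A → Der (A :: Δ) C → Der (Γ ++ Δ) C
  | one_r : Der [] one
  | one_l {Γ A} : Der Γ A → Der (one :: Γ) A
  | top_r (Γ) : Der Γ top
  | tensor_r {Γ Δ A B} : Der Γ A → Der Δ B → Der (Γ ++ Δ) (tensor A B)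
  | tensor_l {Γ A B C} : Der (A :: B :: Γ) C → Der (tensor A B :: Γ) C
  | limp_r {Γ A B} : Der (A :: Γ) B → Der Γ (limp A B)
  | limp_l {Γ Δ A B C} : Der Γ A → Der (B :: Δ) C → Der (limp A B :: (Γ ++ Δ)) C
  | with_r {Γ A B} : Der Γ A → Der Γ B → Der Γ (with_ A B)
  | with_l1 {Γ A B C} : Der (A :: Γ) C → Der (with_ A B :: Γ) C
  | with_l2 {Γ A B C} : Der (B :: Γ) C → Der (with_ A B :: Γ) C
  | bang_l {Γ A C} : Der (A :: Γ) C → Der (bang A :: Γ) C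
  | bang_w {Γ A C} : Der Γ C → Der (bang A :: Γ) C
  | bang_c {Γ A C} : Der (bang A :: bang A :: Γ) C → Der (bang A :: Γ) C
  | bang_r {Γ : List Fm} {A} : Der (Γ.map bang) A → Der (Γ.map bang) (bang A)

/-- Entailment between single formulas. -/
def Entails (A B : Fm) : Prop := Der [A] B

/-- Logical equivalence: mutual derivability. -/
def LEquiv (A B : Fm) : Prop := Entails A B ∧ Entails B A

/-- A constraint is classical if it can be weakened and deduced without
consuming the hypotheses. -/
def IsClassical (c : Fm) : Prop :=
  Entails c Fm.one ∧ ∀ d, Entails d (Fm.tensor c Fm.top) → Entails d (Fm.tensor c d)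

open Fm in
/-- for classical constraints `c, c', d` with `c ⊢ c'`, the formula
`!(c ⊸ c' ⊗ ⊤) ⊗ ⊤` is logically equivalent to `1 ⊗ ⊤`. -/
theorem law1_logical (c c' d : Fm)
    (hc : IsClassical c) (hc' : IsClassical c') (hd : IsClassical d)
    (h : Entails c c') :
    LEquiv (tensor (bang (limp c (tensor c' top))) top) (tensor one top) := by
  constructor
  · -- forward
    apply Der.tensor_l
    apply Der.bang_w
    have h1 : Der ([] ++ [top]) (tensor one top) :=
      Der.tensor_r Der.one_r (Der.top_r [top])
    simpa using h1
  · -- backward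
    have hX : Der [] (bang (limp c (tensor c' top))) := by
      have h0 : Der ([c] ++ []) (tensor c' top) :=
        Der.tensor_r h (Der.top_r [])
      have hlim : Der [] (limp c (tensor c' top)) := Der.limp_r (by simpa using h0)
      exact Der.bang_r (Γ := []) hlim
    have := Der.tensor_r hX (Der.top_r [tensor one top])
    simpa [Entails] using this
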